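/- With h and T as in the context, assume a = b, b ≠ 0, and let p ∈ ℝ satisfy b·p² − c·p − b = 0 (so p ≠ 0 and (0,0,p) is a critical point of T). Set χ = c·B + b·(A − C − 2k³). Then the determinant of the Hessian matrix of T at (0,0,p) equals (b/p)·(p² + 1)²·χ. In particular, if χ ≠ 0 then (0,0,p) is a nondegenerate (Morse) critical point of T. -/

import Mathlib

open Asymptotics Filter Topology

noncomputable section

set_option maxHeartbeats 1000000

theorem hdp8 (c0 c1 c2 c3 c4 c5 c6 c7 c8 x : ℝ) :
    HasDerivAt (fun t : ℝ => (c0) + (c1) * t ^ 1 + (c2) * t ^ 2 + (c3) * t ^ 3 + (c4) * t ^ 4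
      + (c5) * t ^ 5 + (c6) * t ^ 6 + (c7) * t ^ 7 + (c8) * t ^ 8)
    (c1 + 2 * c2 * x + 3 * c3 * x ^ 2 + 4 * c4 * x ^ 3 + 5 * c5 * x ^ 4 + 6 * c6 * x ^ 5
      + 7 * c7 * x ^ 6 + 8 * c8 * x ^ 7) x := by
  have h0 := (((((((((hasDerivAt_const x c0).add
    ((hasDerivAt_pow 1 x).const_mul c1)).add
    ((hasDerivAt_pow 2 x).const_mul c2)).add
    ((hasDerivAt_pow 3 x).const_mul c3)).add
    ((hasDerivAt_pow 4 x).const_mul c4)).add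
    ((hasDerivAt_pow 5 x).const_mul c5)).add
    ((hasDerivAt_pow 6 x).const_mul c6)).add
    ((hasDerivAt_pow 7 x).const_mul c7)).add
    ((hasDerivAt_pow 8 x).const_mul c8))
  refine h0.congr_deriv ?_
  push_cast
  ring

theorem dp8 (c0 c1 c2 c3 c4 c5 c6 c7 c8 x : ℝ) :
    deriv (fun t : ℝ => (c0) + (c1) * t ^ 1 + (c2) * t ^ 2 + (c3) * t ^ 3 + (c4) * t ^ 4
      + (c5) * t ^ 5 + (c6) * t ^ 6 + (c7) * t ^ 7 + (c8) * t ^ 8) x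
    = c1 + 2 * c2 * x + 3 * c3 * x ^ 2 + 4 * c4 * x ^ 3 + 5 * c5 * x ^ 4 + 6 * c6 * x ^ 5
      + 7 * c7 * x ^ 6 + 8 * c8 * x ^ 7 :=
  (hdp8 c0 c1 c2 c3 c4 c5 c6 c7 c8 x).deriv

theorem TDeriv {f1 f2 f3 f4 f5 : ℝ → ℝ} {y1 y2 y3 y4 y5 : ℝ} (p s : ℝ)
    (H1 : HasDerivAt f1 y1 s) (H2 : HasDerivAt f2 y2 s) (H3 : HasDerivAt f3 y3 s)
    (H4 : HasDerivAt f4 y4 s) (H5 : HasDerivAt f5 y5 s) :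
    HasDerivAt (fun t => (f1 t * f2 t * f5 t - (1 + f2 t ^ 2) * f4 t) * p ^ 2
      + ((1 + f1 t ^ 2) * f5 t - (1 + f2 t ^ 2) * f3 t) * p
      + ((1 + f1 t ^ 2) * f4 t - f1 t * f2 t * f3 t))
    (((y1 * f2 s + f1 s * y2) * f5 s + f1 s * f2 s * y5
        - (2 * f2 s * y2 * f4 s + (1 + f2 s ^ 2) * y4)) * p ^ 2
      + (2 * f1 s * y1 * f5 s + (1 + f1 s ^ 2) * y5
        - (2 * f2 s * y2 * f3 s + (1 + f2 s ^ 2) * y3)) * p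
      + (2 * f1 s * y1 * f4 s + (1 + f1 s ^ 2) * y4
        - ((y1 * f2 s + f1 s * y2) * f3 s + f1 s * f2 s * y3))) s := by
  have main := (((((H1.mul H2).mul H5).sub (((H2.pow 2).const_add 1).mul H4)).mul_const
      (p ^ 2)).add
    (((((H1.pow 2).const_add 1).mul H5).sub (((H2.pow 2).const_add 1).mul H3)).mul_const p)).add
    ((((H1.pow 2).const_add 1).mul H4).sub ((H1.mul H2).mul H3))
  refine main.congr_deriv ?_
  simp only [Pi.mul_apply, Pi.pow_apply]
  push_cast
  ring

/-- The Monge chart `h` at an umbilic point (coefficient of `u²v` normalized to 0). -/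
def hFun (k a b c A B C D E u v : ℝ) : ℝ :=
  k / 2 * (u ^ 2 + v ^ 2) + a / 6 * u ^ 3 + b / 2 * u * v ^ 2 + c / 6 * v ^ 3
    + A / 24 * u ^ 4 + B / 6 * u ^ 3 * v + C / 4 * u ^ 2 * v ^ 2
    + D / 6 * u * v ^ 3 + E / 24 * v ^ 4

/-- Partial derivative `h_u`. -/
def h_u (k a b c A B C D E u v : ℝ) : ℝ := deriv (fun x => hFun k a b c A B C D E x v) u

/-- Partial derivative `h_v`. -/
def h_v (k a b c A B C D E u v : ℝ) : ℝ := deriv (fun y => hFun k a b c A B C D E u y) v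

/-- Partial derivative `h_uu`. -/
def h_uu (k a b c A B C D E u v : ℝ) : ℝ := deriv (fun x => h_u k a b c A B C D E x v) u

/-- Partial derivative `h_uv`. -/
def h_uv (k a b c A B C D E u v : ℝ) : ℝ := deriv (fun y => h_u k a b c A B C D E u y) v

/-- Partial derivative `h_vv`. -/
def h_vv (k a b c A B C D E u v : ℝ) : ℝ := deriv (fun y => h_v k a b c A B C D E u y) v

/-- Coefficient `L = h_u h_v h_vv − (1+h_v²) h_uv` of the principal-line equation. -/
def eqL (k a b c A B C D E u v : ℝ) : ℝ :=
  h_u k a b c A B C D E u v * h_v k a b c A B C D E u v * h_vv k a b c A B C D E u v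
    - (1 + h_v k a b c A B C D E u v ^ 2) * h_uv k a b c A B C D E u v

/-- Coefficient `M = (1+h_u²) h_vv − (1+h_v²) h_uu` of the principal-line equation. -/
def eqM (k a b c A B C D E u v : ℝ) : ℝ :=
  (1 + h_u k a b c A B C D E u v ^ 2) * h_vv k a b c A B C D E u v
    - (1 + h_v k a b c A B C D E u v ^ 2) * h_uu k a b c A B C D E u v

/-- Coefficient `N = (1+h_u²) h_uv − h_u h_v h_uu` of the principal-line equation. -/
def eqN (k a b c A B C D E u v : ℝ) : ℝ :=
  (1 + h_u k a b c A B C D E u v ^ 2) * h_uv k a b c A B C D E u v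
    - h_u k a b c A B C D E u v * h_v k a b c A B C D E u v * h_uu k a b c A B C D E u v

/-- `T(u,v,p) = L p² + M p + N`, the lifted principal-line equation. -/
def eqT (k a b c A B C D E u v p : ℝ) : ℝ :=
  eqL k a b c A B C D E u v * p ^ 2 + eqM k a b c A B C D E u v * p + eqN k a b c A B C D E u v

/-- Partial derivative `T_u`. -/
def eqT_u (k a b c A B C D E u v p : ℝ) : ℝ := deriv (fun x => eqT k a b c A B C D E x v p) u

/-- Partial derivative `T_v`. -/
def eqT_v (k a b c A B C D E u v p : ℝ) : ℝ := deriv (fun y => eqT k a b c A B C D E u y p) v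

/-- Partial derivative `T_p`. -/
def eqT_p (k a b c A B C D E u v p : ℝ) : ℝ := deriv (fun q => eqT k a b c A B C D E u v q) p

/-- The Lie–Cartan vector field `X(u,v,p) = (T_p, p T_p, −(T_u + p T_v))` on `ℝ³ = ℝ×ℝ×ℝ`. -/
def lieCartan (k a b c A B C D E : ℝ) (w : ℝ × ℝ × ℝ) : ℝ × ℝ × ℝ :=
  (eqT_p k a b c A B C D E w.1 w.2.1 w.2.2,
   w.2.2 * eqT_p k a b c A B C D E w.1 w.2.1 w.2.2,
   -(eqT_u k a b c A B C D E w.1 w.2.1 w.2.2 + w.2.2 * eqT_v k a b c A B C D E w.1 w.2.1 w.2.2))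

/-- The Lie–Cartan vector field, as a map `(Fin 3 → ℝ) → (Fin 3 → ℝ)`. -/
def lieCartan3 (k a b c A B C D E : ℝ) (w : Fin 3 → ℝ) : Fin 3 → ℝ :=
  ![eqT_p k a b c A B C D E (w 0) (w 1) (w 2),
    w 2 * eqT_p k a b c A B C D E (w 0) (w 1) (w 2),
    -(eqT_u k a b c A B C D E (w 0) (w 1) (w 2)
        + w 2 * eqT_v k a b c A B C D E (w 0) (w 1) (w 2))]

/-- Second partial derivative `T_uu`. -/
def eqT_uu (k a b c A B C D E u v p : ℝ) : ℝ := deriv (fun x => eqT_u k a b c A B C D E x v p) u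
/-- Second partial derivative `T_uv`. -/
def eqT_uv (k a b c A B C D E u v p : ℝ) : ℝ := deriv (fun y => eqT_u k a b c A B C D E u y p) v
/-- Second partial derivative `T_up`. -/
def eqT_up (k a b c A B C D E u v p : ℝ) : ℝ := deriv (fun q => eqT_u k a b c A B C D E u v q) p
/-- Second partial derivative `T_vu`. -/
def eqT_vu (k a b c A B C D E u v p : ℝ) : ℝ := deriv (fun x => eqT_v k a b c A B C D E x v p) u
/-- Second partial derivative `T_vv`. -/
def eqT_vv (k a b c A B C D E u v p : ℝ) : ℝ := deriv (fun y => eqT_v k a b c A B C D E u y p) v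
/-- Second partial derivative `T_vp`. -/
def eqT_vp (k a b c A B C D E u v p : ℝ) : ℝ := deriv (fun q => eqT_v k a b c A B C D E u v q) p
/-- Second partial derivative `T_pu`. -/
def eqT_pu (k a b c A B C D E u v p : ℝ) : ℝ := deriv (fun x => eqT_p k a b c A B C D E x v p) u
/-- Second partial derivative `T_pv`. -/
def eqT_pv (k a b c A B C D E u v p : ℝ) : ℝ := deriv (fun y => eqT_p k a b c A B C D E u y p) v
/-- Second partial derivative `T_pp`. -/
def eqT_pp (k a b c A B C D E u v p : ℝ) : ℝ := deriv (fun q => eqT_p k a b c A B C D E u v q) p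

/-- The Hessian matrix of `T` at `(u,v,p)`. -/
def hessT (k a b c A B C D E u v p : ℝ) : Matrix (Fin 3) (Fin 3) ℝ :=
  !![eqT_uu k a b c A B C D E u v p, eqT_uv k a b c A B C D E u v p, eqT_up k a b c A B C D E u v p;
     eqT_vu k a b c A B C D E u v p, eqT_vv k a b c A B C D E u v p, eqT_vp k a b c A B C D E u v p;
     eqT_pu k a b c A B C D E u v p, eqT_pv k a b c A B C D E u v p, eqT_pp k a b c A B C D E u v p]


theorem h_u_eq (k a b c A B C D E u v : ℝ) :
    h_u k a b c A B C D E u v = ((1 : ℝ)/6) * D * v ^ 3 + ((1 : ℝ)/2) * C * u * v ^ 2 + ((1 : ℝ)/2) * B * u ^ 2 * v + ((1 : ℝ)/6) * A * u ^ 3 + ((1 : ℝ)/2) * b * v ^ 2 + ((1 : ℝ)/2) * a * u ^ 2 + k * u := by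
  have h : (fun x => hFun k a b c A B C D E x v)
      = fun t : ℝ => (((1 : ℝ)/24) * E * v ^ 4 + ((1 : ℝ)/6) * c * v ^ 3 + ((1 : ℝ)/2) * k * v ^ 2) + (((1 : ℝ)/6) * D * v ^ 3 + ((1 : ℝ)/2) * b * v ^ 2) * t ^ 1 + (((1 : ℝ)/4) * C * v ^ 2 + ((1 : ℝ)/2) * k) * t ^ 2 + (((1 : ℝ)/6) * B * v + ((1 : ℝ)/6) * a) * t ^ 3 + (((1 : ℝ)/24) * A) * t ^ 4 + (0) * t ^ 5 + (0) * t ^ 6 + (0) * t ^ 7 + (0) * t ^ 8 := by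
    funext t
    simp only [hFun]
    ring
  simp only [h_u]
  rw [h, dp8]
  ring

theorem h_v_eq (k a b c A B C D E u v : ℝ) :
    h_v k a b c A B C D E u v = ((1 : ℝ)/6) * E * v ^ 3 + ((1 : ℝ)/2) * D * u * v ^ 2 + ((1 : ℝ)/2) * C * u ^ 2 * v + ((1 : ℝ)/6) * B * u ^ 3 + ((1 : ℝ)/2) * c * v ^ 2 + b * u * v + k * v := by
  have h : (fun y => hFun k a b c A B C D E u y)
      = fun t : ℝ => (((1 : ℝ)/24) * A * u ^ 4 + ((1 : ℝ)/6) * a * u ^ 3 + ((1 : ℝ)/2) * k * u ^ 2) + (((1 : ℝ)/6) * B * u ^ 3) * t ^ 1 + (((1 : ℝ)/4) * C * u ^ 2 + ((1 : ℝ)/2) * b * u + ((1 : ℝ)/2) * k) * t ^ 2 + (((1 : ℝ)/6) * D * u + ((1 : ℝ)/6) * c) * t ^ 3 + (((1 : ℝ)/24) * E) * t ^ 4 + (0) * t ^ 5 + (0) * t ^ 6 + (0) * t ^ 7 + (0) * t ^ 8 := by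
    funext t
    simp only [hFun]
    ring
  simp only [h_v]
  rw [h, dp8]
  ring

theorem h_uu_eq (k a b c A B C D E u v : ℝ) :
    h_uu k a b c A B C D E u v = ((1 : ℝ)/2) * C * v ^ 2 + B * u * v + ((1 : ℝ)/2) * A * u ^ 2 + a * u + k := by
  have h : (fun x => h_u k a b c A B C D E x v)
      = fun t : ℝ => (((1 : ℝ)/6) * D * v ^ 3 + ((1 : ℝ)/2) * b * v ^ 2) + (((1 : ℝ)/2) * C * v ^ 2 + k) * t ^ 1 + (((1 : ℝ)/2) * B * v + ((1 : ℝ)/2) * a) * t ^ 2 + (((1 : ℝ)/6) * A) * t ^ 3 + (0) * t ^ 4 + (0) * t ^ 5 + (0) * t ^ 6 + (0) * t ^ 7 + (0) * t ^ 8 := by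
    funext t
    rw [h_u_eq]
    ring
  simp only [h_uu]
  rw [h, dp8]
  ring

theorem h_uv_eq (k a b c A B C D E u v : ℝ) :
    h_uv k a b c A B C D E u v = ((1 : ℝ)/2) * D * v ^ 2 + C * u * v + ((1 : ℝ)/2) * B * u ^ 2 + b * v := by
  have h : (fun y => h_u k a b c A B C D E u y)
      = fun t : ℝ => (((1 : ℝ)/6) * A * u ^ 3 + ((1 : ℝ)/2) * a * u ^ 2 + k * u) + (((1 : ℝ)/2) * B * u ^ 2) * t ^ 1 + (((1 : ℝ)/2) * C * u + ((1 : ℝ)/2) * b) * t ^ 2 + (((1 : ℝ)/6) * D) * t ^ 3 + (0) * t ^ 4 + (0) * t ^ 5 + (0) * t ^ 6 + (0) * t ^ 7 + (0) * t ^ 8 := by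
    funext t
    rw [h_u_eq]
    ring
  simp only [h_uv]
  rw [h, dp8]
  ring

theorem h_vv_eq (k a b c A B C D E u v : ℝ) :
    h_vv k a b c A B C D E u v = ((1 : ℝ)/2) * E * v ^ 2 + D * u * v + ((1 : ℝ)/2) * C * u ^ 2 + c * v + b * u + k := by
  have h : (fun y => h_v k a b c A B C D E u y)
      = fun t : ℝ => (((1 : ℝ)/6) * B * u ^ 3) + (((1 : ℝ)/2) * C * u ^ 2 + b * u + k) * t ^ 1 + (((1 : ℝ)/2) * D * u + ((1 : ℝ)/2) * c) * t ^ 2 + (((1 : ℝ)/6) * E) * t ^ 3 + (0) * t ^ 4 + (0) * t ^ 5 + (0) * t ^ 6 + (0) * t ^ 7 + (0) * t ^ 8 := by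
    funext t
    rw [h_v_eq]
    ring
  simp only [h_vv]
  rw [h, dp8]
  ring

theorem eqT_u_eq (k a b c A B C D E u v p : ℝ) :
    eqT_u k a b c A B C D E u v p = (((h_uu k a b c A B C D E u v) * h_v k a b c A B C D E u v + h_u k a b c A B C D E u v * (h_uv k a b c A B C D E u v)) * h_vv k a b c A B C D E u v + h_u k a b c A B C D E u v * h_v k a b c A B C D E u v * (D * v + C * u + b) - (2 * h_v k a b c A B C D E u v * (h_uv k a b c A B C D E u v) * h_uv k a b c A B C D E u v + (1 + h_v k a b c A B C D E u v ^ 2) * (C * v + B * u))) * p ^ 2 + (2 * h_u k a b c A B C D E u v * (h_uu k a b c A B C D E u v) * h_vv k a b c A B C D E u v + (1 + h_u k a b c A B C D E u v ^ 2) * (D * v + C * u + b) - (2 * h_v k a b c A B C D E u v * (h_uv k a b c A B C D E u v) * h_uu k a b c A B C D E u v + (1 + h_v k a b c A B C D E u v ^ 2) * (B * v + A * u + a))) * p + (2 * h_u k a b c A B C D E u v * (h_uu k a b c A B C D E u v) * h_uv k a b c A B C D E u v + (1 + h_u k a b c A B C D E u v ^ 2) * (C * v + B * u) - (((h_uu k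 a b c A B C D E u v) * h_v k a b c A B C D E u v + h_u k a b c A B C D E u v * (h_uv k a b c A B C D E u v)) * h_uu k a b c A B C D E u v + h_u k a b c A B C D E u v * h_v k a b c A B C D E u v * (B * v + A * u + a))) := by
  have H1 : HasDerivAt (fun x => h_u k a b c A B C D E x v) (h_uu k a b c A B C D E u v) u := by
    have e : (fun x => h_u k a b c A B C D E x v) = fun t : ℝ => (((1 : ℝ)/6) * D * v ^ 3 + ((1 : ℝ)/2) * b * v ^ 2) + (((1 : ℝ)/2) * C * v ^ 2 + k) * t ^ 1 + (((1 : ℝ)/2) * B * v + ((1 : ℝ)/2) * a) * t ^ 2 + (((1 : ℝ)/6) * A) * t ^ 3 + (0) * t ^ 4 + (0) * t ^ 5 + (0) * t ^ 6 + (0) * t ^ 7 + (0) * t ^ 8 := by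
      funext t
      rw [h_u_eq]
      ring
    rw [e]
    convert hdp8 (((1 : ℝ)/6) * D * v ^ 3 + ((1 : ℝ)/2) * b * v ^ 2) (((1 : ℝ)/2) * C * v ^ 2 + k) (((1 : ℝ)/2) * B * v + ((1 : ℝ)/2) * a) (((1 : ℝ)/6) * A) (0) (0) (0) (0) (0) u using 1
    rw [h_uu_eq]
    ring
  have H2 : HasDerivAt (fun x => h_v k a b c A B C D E x v) (h_uv k a b c A B C D E u v) u := by
    have e : (fun x => h_v k a b c A B C D E x v) = fun t : ℝ => (((1 : ℝ)/6) * E * v ^ 3 + ((1 : ℝ)/2) * c * v ^ 2 + k * v) + (((1 : ℝ)/2) * D * v ^ 2 + b * v) * t ^ 1 + (((1 : ℝ)/2) * C * v) * t ^ 2 + (((1 : ℝ)/6) * B) * t ^ 3 + (0) * t ^ 4 + (0) * t ^ 5 + (0) * t ^ 6 + (0) * t ^ 7 + (0) * t ^ 8 := by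
      funext t
      rw [h_v_eq]
      ring
    rw [e]
    convert hdp8 (((1 : ℝ)/6) * E * v ^ 3 + ((1 : ℝ)/2) * c * v ^ 2 + k * v) (((1 : ℝ)/2) * D * v ^ 2 + b * v) (((1 : ℝ)/2) * C * v) (((1 : ℝ)/6) * B) (0) (0) (0) (0) (0) u using 1
    rw [h_uv_eq]
    ring
  have H3 : HasDerivAt (fun x => h_uu k a b c A B C D E x v) (B * v + A * u + a) u := by
    have e : (fun x => h_uu k a b c A B C D E x v) = fun t : ℝ => (((1 : ℝ)/2) * C * v ^ 2 + k) + (B * v + a) * t ^ 1 + (((1 : ℝ)/2) * A) * t ^ 2 + (0) * t ^ 3 + (0) * t ^ 4 + (0) * t ^ 5 + (0) * t ^ 6 + (0) * t ^ 7 + (0) * t ^ 8 := by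
      funext t
      rw [h_uu_eq]
      ring
    rw [e]
    convert hdp8 (((1 : ℝ)/2) * C * v ^ 2 + k) (B * v + a) (((1 : ℝ)/2) * A) (0) (0) (0) (0) (0) (0) u using 1
    ring
  have H4 : HasDerivAt (fun x => h_uv k a b c A B C D E x v) (C * v + B * u) u := by
    have e : (fun x => h_uv k a b c A B C D E x v) = fun t : ℝ => (((1 : ℝ)/2) * D * v ^ 2 + b * v) + (C * v) * t ^ 1 + (((1 : ℝ)/2) * B) * t ^ 2 + (0) * t ^ 3 + (0) * t ^ 4 + (0) * t ^ 5 + (0) * t ^ 6 + (0) * t ^ 7 + (0) * t ^ 8 := by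
      funext t
      rw [h_uv_eq]
      ring
    rw [e]
    convert hdp8 (((1 : ℝ)/2) * D * v ^ 2 + b * v) (C * v) (((1 : ℝ)/2) * B) (0) (0) (0) (0) (0) (0) u using 1
    ring
  have H5 : HasDerivAt (fun x => h_vv k a b c A B C D E x v) (D * v + C * u + b) u := by
    have e : (fun x => h_vv k a b c A B C D E x v) = fun t : ℝ => (((1 : ℝ)/2) * E * v ^ 2 + c * v + k) + (D * v + b) * t ^ 1 + (((1 : ℝ)/2) * C) * t ^ 2 + (0) * t ^ 3 + (0) * t ^ 4 + (0) * t ^ 5 + (0) * t ^ 6 + (0) * t ^ 7 + (0) * t ^ 8 := by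
      funext t
      rw [h_vv_eq]
      ring
    rw [e]
    convert hdp8 (((1 : ℝ)/2) * E * v ^ 2 + c * v + k) (D * v + b) (((1 : ℝ)/2) * C) (0) (0) (0) (0) (0) (0) u using 1
    ring
  have efun : (fun x => eqT k a b c A B C D E x v p)
      = fun x => (h_u k a b c A B C D E x v * h_v k a b c A B C D E x v * h_vv k a b c A B C D E x v - (1 + h_v k a b c A B C D E x v ^ 2) * h_uv k a b c A B C D E x v) * p ^ 2 + ((1 + h_u k a b c A B C D E x v ^ 2) * h_vv k a b c A B C D E x v - (1 + h_v k a b c A B C D E x v ^ 2) * h_uu k a b c A B C D E x v) * p + ((1 + h_u k a b c A B C D E x v ^ 2) * h_uv k a b c A B C D E x v - h_u k a b c A B C D E x v * h_v k a b c A B C D E x v * h_uu k a b c A B C D E x v) := by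
    funext x
    simp only [eqT, eqL, eqM, eqN]
  simp only [eqT_u]
  rw [efun, (TDeriv p u H1 H2 H3 H4 H5).deriv]

theorem eqT_v_eq (k a b c A B C D E u v p : ℝ) :
    eqT_v k a b c A B C D E u v p = (((h_uv k a b c A B C D E u v) * h_v k a b c A B C D E u v + h_u k a b c A B C D E u v * (h_vv k a b c A B C D E u v)) * h_vv k a b c A B C D E u v + h_u k a b c A B C D E u v * h_v k a b c A B C D E u v * (E * v + D * u + c) - (2 * h_v k a b c A B C D E u v * (h_vv k a b c A B C D E u v) * h_uv k a b c A B C D E u v + (1 + h_v k a b c A B C D E u v ^ 2) * (D * v + C * u + b))) * p ^ 2 + (2 * h_u k a b c A B C D E u v * (h_uv k a b c A B C D E u v) * h_vv k a b c A B C D E u v + (1 + h_u k a b c A B C D E u v ^ 2) * (E * v + D * u + c) - (2 * h_v k a b c A B C D E u v * (h_vv k a b c A B C D E u v) * h_uu k a b c A B C D E u v + (1 + h_v k a b c A B C D E u v ^ 2) * (C * v + B * u))) * p + (2 * h_u k a b c A B C D E u v * (h_uv k a b c A B C D E u v) * h_uv k a b c A B C D E u v + (1 + h_u k a b c A B C D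 E u v ^ 2) * (D * v + C * u + b) - (((h_uv k a b c A B C D E u v) * h_v k a b c A B C D E u v + h_u k a b c A B C D E u v * (h_vv k a b c A B C D E u v)) * h_uu k a b c A B C D E u v + h_u k a b c A B C D E u v * h_v k a b c A B C D E u v * (C * v + B * u))) := by
  have H1 : HasDerivAt (fun y => h_u k a b c A B C D E u y) (h_uv k a b c A B C D E u v) v := by
    have e : (fun y => h_u k a b c A B C D E u y) = fun t : ℝ => (((1 : ℝ)/6) * A * u ^ 3 + ((1 : ℝ)/2) * a * u ^ 2 + k * u) + (((1 : ℝ)/2) * B * u ^ 2) * t ^ 1 + (((1 : ℝ)/2) * C * u + ((1 : ℝ)/2) * b) * t ^ 2 + (((1 : ℝ)/6) * D) * t ^ 3 + (0) * t ^ 4 + (0) * t ^ 5 + (0) * t ^ 6 + (0) * t ^ 7 + (0) * t ^ 8 := by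
      funext t
      rw [h_u_eq]
      ring
    rw [e]
    convert hdp8 (((1 : ℝ)/6) * A * u ^ 3 + ((1 : ℝ)/2) * a * u ^ 2 + k * u) (((1 : ℝ)/2) * B * u ^ 2) (((1 : ℝ)/2) * C * u + ((1 : ℝ)/2) * b) (((1 : ℝ)/6) * D) (0) (0) (0) (0) (0) v using 1
    rw [h_uv_eq]
    ring
  have H2 : HasDerivAt (fun y => h_v k a b c A B C D E u y) (h_vv k a b c A B C D E u v) v := by
    have e : (fun y => h_v k a b c A B C D E u y) = fun t : ℝ => (((1 : ℝ)/6) * B * u ^ 3) + (((1 : ℝ)/2) * C * u ^ 2 + b * u + k) * t ^ 1 + (((1 : ℝ)/2) * D * u + ((1 : ℝ)/2) * c) * t ^ 2 + (((1 : ℝ)/6) * E) * t ^ 3 + (0) * t ^ 4 + (0) * t ^ 5 + (0) * t ^ 6 + (0) * t ^ 7 + (0) * t ^ 8 := by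
      funext t
      rw [h_v_eq]
      ring
    rw [e]
    convert hdp8 (((1 : ℝ)/6) * B * u ^ 3) (((1 : ℝ)/2) * C * u ^ 2 + b * u + k) (((1 : ℝ)/2) * D * u + ((1 : ℝ)/2) * c) (((1 : ℝ)/6) * E) (0) (0) (0) (0) (0) v using 1
    rw [h_vv_eq]
    ring
  have H3 : HasDerivAt (fun y => h_uu k a b c A B C D E u y) (C * v + B * u) v := by
    have e : (fun y => h_uu k a b c A B C D E u y) = fun t : ℝ => (((1 : ℝ)/2) * A * u ^ 2 + a * u + k) + (B * u) * t ^ 1 + (((1 : ℝ)/2) * C) * t ^ 2 + (0) * t ^ 3 + (0) * t ^ 4 + (0) * t ^ 5 + (0) * t ^ 6 + (0) * t ^ 7 + (0) * t ^ 8 := by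
      funext t
      rw [h_uu_eq]
      ring
    rw [e]
    convert hdp8 (((1 : ℝ)/2) * A * u ^ 2 + a * u + k) (B * u) (((1 : ℝ)/2) * C) (0) (0) (0) (0) (0) (0) v using 1
    ring
  have H4 : HasDerivAt (fun y => h_uv k a b c A B C D E u y) (D * v + C * u + b) v := by
    have e : (fun y => h_uv k a b c A B C D E u y) = fun t : ℝ => (((1 : ℝ)/2) * B * u ^ 2) + (C * u + b) * t ^ 1 + (((1 : ℝ)/2) * D) * t ^ 2 + (0) * t ^ 3 + (0) * t ^ 4 + (0) * t ^ 5 + (0) * t ^ 6 + (0) * t ^ 7 + (0) * t ^ 8 := by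
      funext t
      rw [h_uv_eq]
      ring
    rw [e]
    convert hdp8 (((1 : ℝ)/2) * B * u ^ 2) (C * u + b) (((1 : ℝ)/2) * D) (0) (0) (0) (0) (0) (0) v using 1
    ring
  have H5 : HasDerivAt (fun y => h_vv k a b c A B C D E u y) (E * v + D * u + c) v := by
    have e : (fun y => h_vv k a b c A B C D E u y) = fun t : ℝ => (((1 : ℝ)/2) * C * u ^ 2 + b * u + k) + (D * u + c) * t ^ 1 + (((1 : ℝ)/2) * E) * t ^ 2 + (0) * t ^ 3 + (0) * t ^ 4 + (0) * t ^ 5 + (0) * t ^ 6 + (0) * t ^ 7 + (0) * t ^ 8 := by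
      funext t
      rw [h_vv_eq]
      ring
    rw [e]
    convert hdp8 (((1 : ℝ)/2) * C * u ^ 2 + b * u + k) (D * u + c) (((1 : ℝ)/2) * E) (0) (0) (0) (0) (0) (0) v using 1
    ring
  have efun : (fun y => eqT k a b c A B C D E u y p)
      = fun y => (h_u k a b c A B C D E u y * h_v k a b c A B C D E u y * h_vv k a b c A B C D E u y - (1 + h_v k a b c A B C D E u y ^ 2) * h_uv k a b c A B C D E u y) * p ^ 2 + ((1 + h_u k a b c A B C D E u y ^ 2) * h_vv k a b c A B C D E u y - (1 + h_v k a b c A B C D E u y ^ 2) * h_uu k a b c A B C D E u y) * p + ((1 + h_u k a b c A B C D E u y ^ 2) * h_uv k a b c A B C D E u y - h_u k a b c A B C D E u y * h_v k a b c A B C D E u y * h_uu k a b c A B C D E u y) := by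
    funext y
    simp only [eqT, eqL, eqM, eqN]
  simp only [eqT_v]
  rw [efun, (TDeriv p v H1 H2 H3 H4 H5).deriv]

theorem eqT_p_eq (k a b c A B C D E u v p : ℝ) :
    eqT_p k a b c A B C D E u v p = eqM k a b c A B C D E u v + 2 * eqL k a b c A B C D E u v * p := by
  have h : (fun q => eqT k a b c A B C D E u v q)
      = fun t : ℝ => (eqN k a b c A B C D E u v) + (eqM k a b c A B C D E u v) * t ^ 1 + (eqL k a b c A B C D E u v) * t ^ 2 + (0:ℝ) * t ^ 3 + (0:ℝ) * t ^ 4 + (0:ℝ) * t ^ 5 + (0:ℝ) * t ^ 6 + (0:ℝ) * t ^ 7 + (0:ℝ) * t ^ 8 := by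
    funext t
    simp only [eqT]
    ring
  simp only [eqT_p]
  rw [h, dp8]
  ring

theorem Tuu00 (k a b c A B C D E p : ℝ) :
    eqT_uu k a b c A B C D E 0 0 p = C * p + B + (-1 : ℝ) * B * p ^ 2 + (-1 : ℝ) * A * p + (2 : ℝ) * k ^ 3 * p := by
  have h : (fun x => eqT_u k a b c A B C D E x 0 p)
      = fun t : ℝ => (b * p + (-1 : ℝ) * a * p) + (C * p + B + (-1 : ℝ) * B * p ^ 2 + (-1 : ℝ) * A * p + (2 : ℝ) * k ^ 3 * p) * t ^ 1 + ((3 : ℝ) * k ^ 2 * b * p + (3 : ℝ) * k ^ 2 * a * p) * t ^ 2 + ((4 : ℝ) * k * a * b * p + k * a ^ 2 * p + (2 : ℝ) * k ^ 2 * C * p + ((4 : ℝ)/3) * k ^ 2 * B + ((2 : ℝ)/3) * k ^ 2 * B * p ^ 2 + ((4 : ℝ)/3) * k ^ 2 * A * p) * t ^ 3 + (((5 : ℝ)/4) * a ^ 2 * b * p + ((5 : ℝ)/6) * k * b * B * p ^ 2 + ((5 : ℝ)/3) * k * b * A * p + ((5 : ℝ)/2) * k * a * C * p + ((5 : ℝ)/4)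 * k * a * B + ((5 : ℝ)/12) * k * a * B * p ^ 2 + ((5 : ℝ)/6) * k * a * A * p) * t ^ 4 + (((1 : ℝ)/2) * a * b * B * p ^ 2 + a * b * A * p + ((3 : ℝ)/4) * a ^ 2 * C * p + ((1 : ℝ)/4) * a ^ 2 * B + ((1 : ℝ)/2) * k * B * C * p ^ 2 + ((-1 : ℝ)/6) * k * B ^ 2 * p + k * A * C * p + ((1 : ℝ)/3) * k * A * B + ((1 : ℝ)/6) * k * A * B * p ^ 2 + ((1 : ℝ)/6) * k * A ^ 2 * p) * t ^ 5 + (((7 : ℝ)/36) * b * A * B * p ^ 2 + ((7 : ℝ)/36) * b * A ^ 2 * p + ((7 : ℝ)/24) * a * B * C * p ^ 2 + ((-7 : ℝ)/36) * a * B ^ 2 * p + ((7 : ℝ)/12) * a * A * C * p + ((7 : ℝ)/72) * a * A * B) * t ^ 6 + (((-1 : ℝ)/9) * B ^ 3 * p ^ 2 + ((1 : ℝ)/9) * A * B * C * p ^ 2 + ((-1 : ℝ)/9) * A * B ^ 2 * p + ((1 : ℝ)/9) * A ^ 2 * C * p) * t ^ 7 + (0) * t ^ 8 := by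
    funext t
    rw [eqT_u_eq]
    simp only [eqL, eqM, eqN, h_u_eq, h_v_eq, h_uu_eq, h_uv_eq, h_vv_eq]
    ring
  simp only [eqT_uu]
  rw [h, dp8]
  ring

theorem Tuv00 (k a b c A B C D E p : ℝ) :
    eqT_uv k a b c A B C D E 0 0 p = D * p + C + (-1 : ℝ) * C * p ^ 2 + (-1 : ℝ) * B * p + (-1 : ℝ) * k ^ 3 + k ^ 3 * p ^ 2 := by
  have h : (fun y => eqT_u k a b c A B C D E 0 y p)
      = fun t : ℝ => (b * p + (-1 : ℝ) * a * p) + (D * p + C + (-1 : ℝ) * C * p ^ 2 + (-1 : ℝ) * B * p + (-1 : ℝ) * k ^ 3 + k ^ 3 * p ^ 2) * t ^ 1 + (((-1 : ℝ)/2) * k ^ 2 * c + ((3 : ℝ)/2) * k ^ 2 * c * p ^ 2 + (-1 : ℝ) * k ^ 2 * b * p + (-1 : ℝ) * k ^ 2 * a * p) * t ^ 2 + (((1 : ℝ)/2) * k * c ^ 2 * p ^ 2 + ((1 : ℝ)/2) * k * b ^ 2 + (-1 : ℝ) * k * b ^ 2 * p ^ 2 + (-1 : ℝ) * k * a * c *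 p + ((-1 : ℝ)/2) * k * a * b + ((-1 : ℝ)/6) * k ^ 2 * E + ((2 : ℝ)/3) * k ^ 2 * E * p ^ 2 + ((-2 : ℝ)/3) * k ^ 2 * D * p + (-1 : ℝ) * k ^ 2 * C + ((-1 : ℝ)/2) * k ^ 2 * C * p ^ 2 + (-1 : ℝ) * k ^ 2 * B * p) * t ^ 3 + (((-1 : ℝ)/4) * b ^ 2 * c * p ^ 2 + ((1 : ℝ)/4) * b ^ 3 * p + ((-1 : ℝ)/4) * a * c ^ 2 * p + ((-1 : ℝ)/4) * a * b * c + ((5 : ℝ)/12) * k * c * E * p ^ 2 + ((-1 : ℝ)/6) * k * c * D * p + ((-1 : ℝ)/2) * k * c * C + ((-1 : ℝ)/4) * k * c * C * p ^ 2 + (-1 : ℝ) * k * c * B * p + ((1 : ℝ)/6) * k * b * E * p + ((5 : ℝ)/12) * k * b * D + ((-11 : ℝ)/12) * k * b * D * p ^ 2 + ((-1 : ℝ)/2) * k * b * C * p + ((-1 : ℝ)/2) * k * b * B + ((-1 : ℝ)/3) * k * a * E * p + ((-1 : ℝ)/6) * k * a * D) * t ^ 4 + (((-1 : ℝ)/4)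 * c ^ 2 * B * p + ((-1 : ℝ)/4) * b * c * D * p ^ 2 + ((-1 : ℝ)/4) * b * c * B + ((5 : ℝ)/12) * b ^ 2 * D * p + ((1 : ℝ)/2) * b ^ 2 * C + ((-1 : ℝ)/6) * a * c * E * p + ((-1 : ℝ)/12) * a * c * D + ((-1 : ℝ)/12) * a * b * E + ((1 : ℝ)/12) * k * E ^ 2 * p ^ 2 + ((1 : ℝ)/12) * k * D ^ 2 + ((-1 : ℝ)/4) * k * D ^ 2 * p ^ 2 + ((-1 : ℝ)/6) * k * C * E + ((-1 : ℝ)/3) * k * C * D * p + ((-1 : ℝ)/4) * k * C ^ 2 + ((-1 : ℝ)/3) * k * B * E * p + ((-1 : ℝ)/6) * k * B * D) * t ^ 5 + (((-1 : ℝ)/12) * c * D ^ 2 * p ^ 2 + ((1 : ℝ)/24) * c * C * E * p ^ 2 + ((-1 : ℝ)/12) * c * C * D * p + ((-1 : ℝ)/8) * c * C ^ 2 + ((-1 : ℝ)/6) * c * B * E * p + ((-1 : ℝ)/12) * c * B * D + ((-1 : ℝ)/72) * b * D * E * p ^ 2 + ((7 : ℝ)/36) * b * D ^ 2 * p + ((1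 : ℝ)/12) * b * C * E * p + ((3 : ℝ)/8) * b * C * D + ((-1 : ℝ)/12) * b * B * E + ((-1 : ℝ)/36) * a * E ^ 2 * p + ((-1 : ℝ)/36) * a * D * E) * t ^ 6 + (((-1 : ℝ)/72) * D ^ 2 * E * p ^ 2 + ((1 : ℝ)/36) * D ^ 3 * p + ((1 : ℝ)/72) * C * E ^ 2 * p ^ 2 + ((5 : ℝ)/72) * C * D ^ 2 + ((-1 : ℝ)/24) * C ^ 2 * E + ((-1 : ℝ)/36) * B * E ^ 2 * p + ((-1 : ℝ)/36) * B * D * E) * t ^ 7 + (0) * t ^ 8 := by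
    funext t
    rw [eqT_u_eq]
    simp only [eqL, eqM, eqN, h_u_eq, h_v_eq, h_uu_eq, h_uv_eq, h_vv_eq]
    ring
  simp only [eqT_uv]
  rw [h, dp8]
  ring

theorem Tup00 (k a b c A B C D E p : ℝ) :
    eqT_up k a b c A B C D E 0 0 p = b + (-1 : ℝ) * a := by
  have h : (fun q => eqT_u k a b c A B C D E 0 0 q)
      = fun t : ℝ => (0) + (b + (-1 : ℝ) * a) * t ^ 1 + (0) * t ^ 2 + (0) * t ^ 3 + (0) * t ^ 4 + (0) * t ^ 5 + (0) * t ^ 6 + (0) * t ^ 7 + (0) * t ^ 8 := by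
    funext t
    rw [eqT_u_eq]
    simp only [eqL, eqM, eqN, h_u_eq, h_v_eq, h_uu_eq, h_uv_eq, h_vv_eq]
    ring
  simp only [eqT_up]
  rw [h, dp8]
  ring

theorem Tvu00 (k a b c A B C D E p : ℝ) :
    eqT_vu k a b c A B C D E 0 0 p = D * p + C + (-1 : ℝ) * C * p ^ 2 + (-1 : ℝ) * B * p + (-1 : ℝ) * k ^ 3 + k ^ 3 * p ^ 2 := by
  have h : (fun x => eqT_v k a b c A B C D E x 0 p)
      = fun t : ℝ => (c * p + b + (-1 : ℝ) * b * p ^ 2) + (D * p + C + (-1 : ℝ) * C * p ^ 2 + (-1 : ℝ) * B * p + (-1 : ℝ) * k ^ 3 + k ^ 3 * p ^ 2) * t ^ 1 + (k ^ 2 * c * p + (2 : ℝ) * k ^ 2 * b * p ^ 2 + ((-3 : ℝ)/2) * k ^ 2 * a + ((1 : ℝ)/2) * k ^ 2 * a * p ^ 2) * t ^ 2 + (k * b ^ 2 * p ^ 2 + k * a * c * p + ((-1 : ℝ)/2) * k * a * b + k * a * b * p ^ 2 + ((-1 : ℝ)/2) * k * a ^ 2 + k ^ 2 * D * p + ((1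 : ℝ)/2) * k ^ 2 * C + k ^ 2 * C * p ^ 2 + ((2 : ℝ)/3) * k ^ 2 * B * p + ((-2 : ℝ)/3) * k ^ 2 * A + ((1 : ℝ)/6) * k ^ 2 * A * p ^ 2) * t ^ 3 + (((1 : ℝ)/2) * a * b ^ 2 * p ^ 2 + ((1 : ℝ)/4) * a ^ 2 * c * p + ((-1 : ℝ)/4) * a ^ 2 * b + ((1 : ℝ)/6) * k * c * B * p ^ 2 + ((1 : ℝ)/3) * k * c * A * p + k * b * C * p ^ 2 + ((2 : ℝ)/3) * k * b * B * p + ((-1 : ℝ)/3) * k * b * A + ((1 : ℝ)/3) * k * b * A * p ^ 2 + k * a * D * p + ((1 : ℝ)/4) * k * a * C + ((1 : ℝ)/2) * k * a * C * p ^ 2 + ((1 : ℝ)/6) * k * a * B * p + ((-5 : ℝ)/12) * k * a * A) * t ^ 4 + (((1 : ℝ)/6) * b ^ 2 * A * p ^ 2 + ((1 : ℝ)/12) * a * c * B * p ^ 2 + ((1 : ℝ)/6) * a * c * A * p + ((1 : ℝ)/2) * a * b * C * p ^ 2 + ((1 : ℝ)/6) * a * b * B * p + ((-1 : ℝ)/4)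 * a * b * A + ((1 : ℝ)/4) * a ^ 2 * D * p + ((1 : ℝ)/4) * k * C ^ 2 * p ^ 2 + ((1 : ℝ)/6) * k * B * D * p ^ 2 + ((1 : ℝ)/3) * k * B * C * p + ((1 : ℝ)/4) * k * B ^ 2 + ((-1 : ℝ)/12) * k * B ^ 2 * p ^ 2 + ((1 : ℝ)/3) * k * A * D * p + ((1 : ℝ)/6) * k * A * C * p ^ 2 + ((-1 : ℝ)/12) * k * A ^ 2) * t ^ 5 + (((1 : ℝ)/36) * c * A * B * p ^ 2 + ((1 : ℝ)/36) * c * A ^ 2 * p + ((-1 : ℝ)/9) * b * B ^ 2 * p ^ 2 + ((1 : ℝ)/6) * b * A * C * p ^ 2 + ((-1 : ℝ)/18) * b * A ^ 2 + ((1 : ℝ)/8) * a * C ^ 2 * p ^ 2 + ((1 : ℝ)/12) * a * B * D * p ^ 2 + ((1 : ℝ)/12) * a * B * C * p + ((1 : ℝ)/12) * a * B ^ 2 + ((1 : ℝ)/6) * a * A * D * p + ((-1 : ℝ)/24) * a * A * C) * t ^ 6 + (((-5 : ℝ)/72) * B ^ 2 * C * p ^ 2 + ((-1 : ℝ)/36)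 * B ^ 3 * p + ((1 : ℝ)/24) * A * C ^ 2 * p ^ 2 + ((1 : ℝ)/36) * A * B * D * p ^ 2 + ((1 : ℝ)/72) * A * B ^ 2 + ((1 : ℝ)/36) * A ^ 2 * D * p + ((-1 : ℝ)/72) * A ^ 2 * C) * t ^ 7 + (0) * t ^ 8 := by
    funext t
    rw [eqT_v_eq]
    simp only [eqL, eqM, eqN, h_u_eq, h_v_eq, h_uu_eq, h_uv_eq, h_vv_eq]
    ring
  simp only [eqT_vu]
  rw [h, dp8]
  ring

theorem Tvv00 (k a b c A B C D E p : ℝ) :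
    eqT_vv k a b c A B C D E 0 0 p = E * p + D + (-1 : ℝ) * D * p ^ 2 + (-1 : ℝ) * C * p + (-2 : ℝ) * k ^ 3 * p := by
  have h : (fun y => eqT_v k a b c A B C D E 0 y p)
      = fun t : ℝ => (c * p + b + (-1 : ℝ) * b * p ^ 2) + (E * p + D + (-1 : ℝ) * D * p ^ 2 + (-1 : ℝ) * C * p + (-2 : ℝ) * k ^ 3 * p) * t ^ 1 + ((-3 : ℝ) * k ^ 2 * c * p + ((-3 : ℝ)/2) * k ^ 2 * b + ((-3 : ℝ)/2) * k ^ 2 * b * p ^ 2) * t ^ 2 + ((-1 : ℝ) * k * c ^ 2 * p + (-1 : ℝ) * k * b * c + (-1 : ℝ) * k * b * c * p ^ 2 + k * b ^ 2 * p + ((-4 : ℝ)/3) * k ^ 2 * E * p + ((-2 : ℝ)/3) * k ^ 2 * D + ((-4 : ℝ)/3) * k ^ 2 * D * p ^ 2 + (-2 : ℝ) * k ^ 2 * C * p) * t ^ 3 + (((5 : ℝ)/4) * b ^ 2 * c * p + ((5 : ℝ)/4) * b ^ 3 + ((-5 : ℝ)/6) * k * c * E * p + ((-5 : ℝ)/12)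 * k * c * D + ((-5 : ℝ)/4) * k * c * D * p ^ 2 + ((-5 : ℝ)/2) * k * c * C * p + ((-5 : ℝ)/12) * k * b * E + ((5 : ℝ)/6) * k * b * D * p + ((-5 : ℝ)/4) * k * b * C) * t ^ 4 + (((-1 : ℝ)/4) * c ^ 2 * D * p ^ 2 + ((-3 : ℝ)/4) * c ^ 2 * C * p + ((1 : ℝ)/4) * b * c * E * p ^ 2 + b * c * D * p + ((-3 : ℝ)/4) * b * c * C + ((3 : ℝ)/4) * b ^ 2 * E * p + ((7 : ℝ)/4) * b ^ 2 * D + ((-1 : ℝ)/6) * k * E ^ 2 * p + ((-1 : ℝ)/6) * k * D * E + ((-1 : ℝ)/3) * k * D * E * p ^ 2 + ((1 : ℝ)/6) * k * D ^ 2 * p + (-1 : ℝ) * k * C * E * p + ((-1 : ℝ)/2) * k * C * D) * t ^ 5 + (((-7 : ℝ)/72) * c * D * E * p ^ 2 + ((7 : ℝ)/36) * c * D ^ 2 * p + ((-7 : ℝ)/12) * c * C * E * p + ((-7 : ℝ)/24) * c * C * D + ((7 : ℝ)/72) * b * E ^ 2 * p ^ 2 + ((7 : ℝ)/12) * b * D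 * E * p + ((7 : ℝ)/9) * b * D ^ 2 + ((-7 : ℝ)/24) * b * C * E) * t ^ 6 + (((1 : ℝ)/9) * D ^ 2 * E * p + ((1 : ℝ)/9) * D ^ 3 + ((-1 : ℝ)/9) * C * E ^ 2 * p + ((-1 : ℝ)/9) * C * D * E) * t ^ 7 + (0) * t ^ 8 := by
    funext t
    rw [eqT_v_eq]
    simp only [eqL, eqM, eqN, h_u_eq, h_v_eq, h_uu_eq, h_uv_eq, h_vv_eq]
    ring
  simp only [eqT_vv]
  rw [h, dp8]
  ring

theorem Tvp00 (k a b c A B C D E p : ℝ) :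
    eqT_vp k a b c A B C D E 0 0 p = c + (-2 : ℝ) * b * p := by
  have h : (fun q => eqT_v k a b c A B C D E 0 0 q)
      = fun t : ℝ => (b) + (c) * t ^ 1 + ((-1 : ℝ) * b) * t ^ 2 + (0) * t ^ 3 + (0) * t ^ 4 + (0) * t ^ 5 + (0) * t ^ 6 + (0) * t ^ 7 + (0) * t ^ 8 := by
    funext t
    rw [eqT_v_eq]
    simp only [eqL, eqM, eqN, h_u_eq, h_v_eq, h_uu_eq, h_uv_eq, h_vv_eq]
    ring
  simp only [eqT_vp]
  rw [h, dp8]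
  ring

theorem Tpu00 (k a b c A B C D E p : ℝ) :
    eqT_pu k a b c A B C D E 0 0 p = b + (-1 : ℝ) * a := by
  have h : (fun x => eqT_p k a b c A B C D E x 0 p)
      = fun t : ℝ => (0) + (b + (-1 : ℝ) * a) * t ^ 1 + (((1 : ℝ)/2) * C + (-1 : ℝ) * B * p + ((-1 : ℝ)/2) * A + k ^ 3) * t ^ 2 + (k ^ 2 * b + k ^ 2 * a) * t ^ 3 + (k * a * b + ((1 : ℝ)/4) * k * a ^ 2 + ((1 : ℝ)/2) * k ^ 2 * C + ((1 : ℝ)/3) * k ^ 2 * B * p + ((1 : ℝ)/3) * k ^ 2 * A) * t ^ 4 + (((1 : ℝ)/4) * a ^ 2 * b + ((1 : ℝ)/3) * k * b * B * p + ((1 : ℝ)/3) * k * b * A + ((1 : ℝ)/2) * k * a * C + ((1 : ℝ)/6) * k * a * B * p + ((1 : ℝ)/6) * k * a * A) * t ^ 5 + (((1 : ℝ)/6) * a * b * B * p + ((1 : ℝ)/6) * a * b * A + ((1 : ℝ)/8) * a ^ 2 * C + ((1 : ℝ)/6) * k * B * C * p + ((-1 : ℝ)/36) * k * B ^ 2 +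 ((1 : ℝ)/6) * k * A * C + ((1 : ℝ)/18) * k * A * B * p + ((1 : ℝ)/36) * k * A ^ 2) * t ^ 6 + (((1 : ℝ)/18) * b * A * B * p + ((1 : ℝ)/36) * b * A ^ 2 + ((1 : ℝ)/12) * a * B * C * p + ((-1 : ℝ)/36) * a * B ^ 2 + ((1 : ℝ)/12) * a * A * C) * t ^ 7 + (((-1 : ℝ)/36) * B ^ 3 * p + ((1 : ℝ)/36) * A * B * C * p + ((-1 : ℝ)/72) * A * B ^ 2 + ((1 : ℝ)/72) * A ^ 2 * C) * t ^ 8 := by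
    funext t
    rw [eqT_p_eq]
    simp only [eqL, eqM, eqN, h_u_eq, h_v_eq, h_uu_eq, h_uv_eq, h_vv_eq]
    ring
  simp only [eqT_pu]
  rw [h, dp8]
  ring

theorem Tpv00 (k a b c A B C D E p : ℝ) :
    eqT_pv k a b c A B C D E 0 0 p = c + (-2 : ℝ) * b * p := by
  have h : (fun y => eqT_p k a b c A B C D E 0 y p)
      = fun t : ℝ => (0) + (c + (-2 : ℝ) * b * p) * t ^ 1 + (((1 : ℝ)/2) * E + (-1 : ℝ) * D * p + ((-1 : ℝ)/2) * C + (-1 : ℝ) * k ^ 3) * t ^ 2 + ((-1 : ℝ) * k ^ 2 * c + (-1 : ℝ) * k ^ 2 * b * p) * t ^ 3 + (((-1 : ℝ)/4) * k * c ^ 2 + ((-1 : ℝ)/2) * k * b * c * p + ((1 : ℝ)/4) * k * b ^ 2 + ((-1 : ℝ)/3) * k ^ 2 * E + ((-2 : ℝ)/3) * k ^ 2 * D * p + ((-1 : ℝ)/2) * k ^ 2 * C) * t ^ 4 + (((1 : ℝ)/4) * b ^ 2 * c + ((-1 : ℝ)/6) * k * c * E + ((-1 : ℝ)/2) * k * c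 * D * p + ((-1 : ℝ)/2) * k * c * C + ((1 : ℝ)/6) * k * b * D) * t ^ 5 + (((-1 : ℝ)/12) * c ^ 2 * D * p + ((-1 : ℝ)/8) * c ^ 2 * C + ((1 : ℝ)/12) * b * c * E * p + ((1 : ℝ)/6) * b * c * D + ((1 : ℝ)/8) * b ^ 2 * E + ((-1 : ℝ)/36) * k * E ^ 2 + ((-1 : ℝ)/9) * k * D * E * p + ((1 : ℝ)/36) * k * D ^ 2 + ((-1 : ℝ)/6) * k * C * E) * t ^ 6 + (((-1 : ℝ)/36) * c * D * E * p + ((1 : ℝ)/36) * c * D ^ 2 + ((-1 : ℝ)/12) * c * C * E + ((1 : ℝ)/36) * b * E ^ 2 * p + ((1 : ℝ)/12) * b * D * E) * t ^ 7 + (((1 : ℝ)/72) * D ^ 2 * E + ((-1 : ℝ)/72) * C * E ^ 2) * t ^ 8 := by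
    funext t
    rw [eqT_p_eq]
    simp only [eqL, eqM, eqN, h_u_eq, h_v_eq, h_uu_eq, h_uv_eq, h_vv_eq]
    ring
  simp only [eqT_pv]
  rw [h, dp8]
  ring

theorem Tpp00 (k a b c A B C D E p : ℝ) :
    eqT_pp k a b c A B C D E 0 0 p = 0 := by
  have h : (fun q => eqT_p k a b c A B C D E 0 0 q)
      = fun t : ℝ => (0) + (0) * t ^ 1 + (0) * t ^ 2 + (0) * t ^ 3 + (0) * t ^ 4 + (0) * t ^ 5 + (0) * t ^ 6 + (0) * t ^ 7 + (0) * t ^ 8 := by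
    funext t
    rw [eqT_p_eq]
    simp only [eqL, eqM, eqN, h_u_eq, h_v_eq, h_uu_eq, h_uv_eq, h_vv_eq]
    ring
  simp only [eqT_pp]
  rw [h, dp8]
  ring

/-- For the `D¹₂,₃` pattern (`a = b ≠ 0`) and `p` a root of `bp² − cp − b = 0` (so
`p ≠ 0` and `(0,0,p)` is a critical point of `T`), with `χ = cB + b(A − C − 2k³)`:
`det Hess T(0,0,p) = (b/p)(p²+1)² χ`; in particular if `χ ≠ 0` then `(0,0,p)` is a
nondegenerate (Morse) critical point of `T`. -/
theorem stmt_9 (k a b c A B C D E : ℝ) (ha : a = b) (hb : b ≠ 0) (p : ℝ)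
    (hp : b * p ^ 2 - c * p - b = 0) :
    p ≠ 0 ∧
    (hessT k a b c A B C D E 0 0 p).det
      = b / p * (p ^ 2 + 1) ^ 2 * (c * B + b * (A - C - 2 * k ^ 3)) ∧
    (c * B + b * (A - C - 2 * k ^ 3) ≠ 0 → (hessT k a b c A B C D E 0 0 p).det ≠ 0) := by
  subst ha
  have hp0 : p ≠ 0 := by
    intro h
    apply hb
    simpa [h] using hp
  have hc : c = a * p - a / p := by
    field_simp
    linear_combination -hp
  have hdet : (hessT k a a c A B C D E 0 0 p).det
      = a / p * (p ^ 2 + 1) ^ 2 * (c * B + a * (A - C - 2 * k ^ 3)) := by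
    simp only [hessT, Matrix.det_fin_three, Matrix.cons_val', Matrix.cons_val_zero,
      Matrix.cons_val_one, Matrix.head_cons, Matrix.empty_val', Matrix.cons_val_fin_one,
      Matrix.head_fin_const, Matrix.of_apply, Matrix.cons_val_two, Matrix.tail_cons]
    rw [Tuu00, Tuv00, Tup00, Tvu00, Tvv00, Tvp00, Tpu00, Tpv00, Tpp00, hc]
    field_simp
    ring
  exact ⟨hp0, hdet, fun hchi => by
    rw [hdet]
    exact mul_ne_zero (mul_ne_zero (div_ne_zero hb hp0)
      (pow_ne_zero _ (by positivity))) hchi⟩
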